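/- arXiv:2001.00136 — 8 statements merged into one kernel-verified Lean document; each statement's English description precedes it below -/
import Mathlib

section
/- Let P ⊆ ℝ^d be a closed convex cone spanning ℝ^d with P ∩ (−P) = {0}, and let Ω be the interior of P. Let H̃ be a complex Hilbert space, let U : ℝ^d → B(H̃) be a group homomorphism into the unitary operators on H̃ (U_{x+y} = U_x U_y, U_0 = I), and let H ⊆ H̃ be a closed subspace such that: (i) U_a(H) ⊆ H for every a ∈ Ω; (ii) ⋂_{a∈Ω} U_a(H) = {0}; (iii) ⋃_{a∈Ω} U_{−a}(H) is dense in H̃. Let K = H^⊥. Then ⋂_{a∈Ω} U_{−a}(K) = {0}. -/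
section

open Set

variable {𝕜 E F ι : Type*} [RCLike 𝕜] [NormedAddCommGroup E] [InnerProductSpace 𝕜 E]
  [NormedAddCommGroup F] [InnerProductSpace 𝕜 F]

theorem LinearIsometryEquiv.inner_eq_zero_of_mem_image_orthogonal (e : E ≃ₗᵢ[𝕜] F)
    {H : Submodule 𝕜 E} {x y : F} (hx : x ∈ e '' (Hᗮ : Set E)) (hy : y ∈ e '' (H : Set E)) :
    inner 𝕜 x y = 0 := by
  obtain ⟨ξ, hξ, rfl⟩ := hx
  obtain ⟨η, hη, rfl⟩ := hy
  rw [e.inner_map_map]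
  exact Submodule.inner_left_of_mem_orthogonal hη hξ

/-- A vector in every `e i (Hᗮ)` is orthogonal to every `e i (H)`, hence to their dense union. -/
theorem biInter_image_orthogonal_eq_zero_of_dense (e : ι → E ≃ₗᵢ[𝕜] F) (s : Set ι)
    (H : Submodule 𝕜 E) (hdense : Dense (⋃ i ∈ s, ⇑(e i) '' (H : Set E))) :
    (⋂ i ∈ s, ⇑(e i) '' (Hᗮ : Set E)) = {0} := by
  refine eq_singleton_iff_unique_mem.mpr
    ⟨mem_iInter₂.mpr fun i _ => ⟨0, Hᗮ.zero_mem, map_zero _⟩, fun x hx => ?_⟩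
  refine hdense.eq_zero_of_inner_left 𝕜 fun y hy => ?_
  obtain ⟨i, hi, hy⟩ := mem_iUnion₂.mp hy
  exact (e i).inner_eq_zero_of_mem_image_orthogonal (mem_iInter₂.mp hx i hi) hy

end

theorem pure_compression_of_dilation_general {d : ℕ}
    (P : Set (EuclideanSpace ℝ (Fin d)))
    {H' : Type*} [NormedAddCommGroup H'] [InnerProductSpace ℂ H']
    (U : EuclideanSpace ℝ (Fin d) → (H' ≃ₗᵢ[ℂ] H'))
    (H : Submodule ℂ H')
    (hdense : Dense (⋃ a ∈ interior P, ⇑(U (-a)) '' (H : Set H'))) :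
    (⋂ a ∈ interior P, ⇑(U (-a)) '' (Hᗮ : Set H')) = {0} :=
  biInter_image_orthogonal_eq_zero_of_dense (fun a => U (-a)) (interior P) H hdense

/-- Let `P ⊆ ℝ^d` be a closed convex cone spanning `ℝ^d` with `P ∩ (−P) = {0}`
and interior `Ω`. Let `U : ℝ^d → U(H̃)` be a unitary representation, and `H ⊆ H̃` a closed
subspace invariant under `U_a` for `a ∈ Ω`, with `⋂_{a∈Ω} U_a(H) = {0}` and
`⋃_{a∈Ω} U_{−a}(H)` dense. Then for `K = Hᗮ` we have `⋂_{a∈Ω} U_{−a}(K) = {0}`. -/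
theorem pure_compression_of_dilation {d : ℕ}
    (P : Set (EuclideanSpace ℝ (Fin d)))
    (hPclosed : IsClosed P)
    (hPadd : ∀ x ∈ P, ∀ y ∈ P, x + y ∈ P)
    (hPsmul : ∀ (t : ℝ), 0 ≤ t → ∀ x ∈ P, t • x ∈ P)
    (hPspan : Submodule.span ℝ P = ⊤)
    (hPpointed : P ∩ (-P) = {0})
    {H' : Type*} [NormedAddCommGroup H'] [InnerProductSpace ℂ H'] [CompleteSpace H']
    (U : EuclideanSpace ℝ (Fin d) → (H' ≃ₗᵢ[ℂ] H'))
    (hU0 : U 0 = LinearIsometryEquiv.refl ℂ H')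
    (hUadd : ∀ x y, ∀ ξ : H', U (x + y) ξ = U x (U y ξ))
    (H : Submodule ℂ H')
    (hHclosed : IsClosed (H : Set H'))
    (hinv : ∀ a ∈ interior P, ⇑(U a) '' (H : Set H') ⊆ (H : Set H'))
    (hpure : (⋂ a ∈ interior P, ⇑(U a) '' (H : Set H')) = {0})
    (hdense : Dense (⋃ a ∈ interior P, ⇑(U (-a)) '' (H : Set H'))) :
    (⋂ a ∈ interior P, ⇑(U (-a)) '' (Hᗮ : Set H')) = {0} :=
  pure_compression_of_dilation_general P U H hdense
end

section
/- Let P ⊆ ℝ^d be a closed convex cone spanning ℝ^d with P ∩ (−P) = {0}, let Ω be the interior of P, and let A be a P-module. Then for every compact subset K ⊆ ℝ^d there exists a ∈ Ω such that K ⊆ interior(A) − a, i.e. y + a ∈ interior(A) for every y ∈ K. -/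
/-- For a closed convex cone `P ⊆ ℝ^d` spanning `ℝ^d` with `P ∩ (−P) = {0}`
(with interior `Ω = interior P`) and a `P`-module `A`, every compact set `K ⊆ ℝ^d`
is contained in `interior A − a` for some `a ∈ Ω`. -/
theorem compact_subset_interior_sub {d : ℕ}
    (P : Set (EuclideanSpace ℝ (Fin d)))
    (hPclosed : IsClosed P)
    (hPadd : ∀ x ∈ P, ∀ y ∈ P, x + y ∈ P)
    (hPsmul : ∀ (t : ℝ), 0 ≤ t → ∀ x ∈ P, t • x ∈ P)
    (hPspan : Submodule.span ℝ P = ⊤)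
    (hPpointed : P ∩ (-P) = {0})
    (A : Set (EuclideanSpace ℝ (Fin d)))
    (hAne : A.Nonempty) (hAproper : A ≠ Set.univ) (hAclosed : IsClosed A)
    (hAmod : ∀ x ∈ A, ∀ p ∈ P, x + p ∈ A) :
    ∀ K : Set (EuclideanSpace ℝ (Fin d)), IsCompact K →
      ∃ a ∈ interior P, ∀ y ∈ K, y + a ∈ interior A := by
  intro K hK
  obtain ⟨x₀, hx₀⟩ := hAne
  -- P is nonempty
  have hPne : P.Nonempty := by
    by_contra h
    rw [Set.not_nonempty_iff_eq_empty] at h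
    rw [h, Submodule.span_empty] at hPspan
    have : Subsingleton (EuclideanSpace ℝ (Fin d)) := by
      constructor
      intro a b
      have ha : a ∈ (⊥ : Submodule ℝ (EuclideanSpace ℝ (Fin d))) := by
        rw [hPspan]; trivial
      have hb : b ∈ (⊥ : Submodule ℝ (EuclideanSpace ℝ (Fin d))) := by
        rw [hPspan]; trivial
      rw [Submodule.mem_bot] at ha hb
      rw [ha, hb]
    exact hAproper (Set.eq_univ_of_forall fun y => (Subsingleton.elim y x₀) ▸ hx₀)
  obtain ⟨p₀, hp₀⟩ := hPne
  have h0P : (0 : EuclideanSpace ℝ (Fin d)) ∈ P := by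
    simpa using hPsmul 0 le_rfl p₀ hp₀
  -- P convex
  have hPconv : Convex ℝ P := by
    intro x hx y hy a b ha hb _
    exact hPadd _ (hPsmul a ha x hx) _ (hPsmul b hb y hy)
  -- interior P nonempty
  have hspan : affineSpan ℝ P = ⊤ := by
    rw [AffineSubspace.affineSpan_eq_top_iff_vectorSpan_eq_top_of_nonempty ℝ _ _ ⟨0, h0P⟩]
    rw [eq_top_iff, ← hPspan, Submodule.span_le]
    intro x hx
    simpa using vsub_mem_vectorSpan ℝ hx h0P
  obtain ⟨ω, hω⟩ := hPconv.interior_nonempty_iff_affineSpan_eq_top.2 hspan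
  obtain ⟨ε, hε, hball⟩ := Metric.isOpen_iff.1 isOpen_interior ω hω
  have hballP : Metric.ball ω ε ⊆ P := hball.trans interior_subset
  -- scaled balls
  have hscale : ∀ t : ℝ, 0 < t → Metric.ball (t • ω) (t * ε) ⊆ P := by
    intro t ht z hz
    have : t⁻¹ • z ∈ Metric.ball ω ε := by
      rw [Metric.mem_ball] at hz ⊢
      have : dist (t⁻¹ • z) (t⁻¹ • (t • ω)) < ε := by
        rw [dist_smul₀, Real.norm_eq_abs, abs_of_pos (inv_pos.2 ht)]
        calc t⁻¹ * dist z (t • ω) < t⁻¹ * (t * ε) := by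
              exact mul_lt_mul_of_pos_left hz (inv_pos.2 ht)
          _ = ε := by field_simp
      rwa [inv_smul_smul₀ ht.ne'] at this
    have := hPsmul t ht.le _ (hballP this)
    rwa [smul_inv_smul₀ ht.ne'] at this
  -- bound on K
  obtain ⟨R, hRpos, hRK⟩ : ∃ R : ℝ, 0 < R ∧ ∀ y ∈ K, ‖y - x₀‖ < R := by
    rcases K.eq_empty_or_nonempty with h | ⟨y₁, hy₁⟩
    · exact ⟨1, one_pos, by simp [h]⟩
    · obtain ⟨R, hR⟩ := (hK.image (show Continuous fun y => ‖y - x₀‖ from (continuous_id.sub continuous_const).norm)).bddAbove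
      have h0 : (0:ℝ) ≤ R := le_trans (norm_nonneg _) (hR ⟨y₁, hy₁, rfl⟩)
      exact ⟨R + 1, by linarith, fun y hy => by have := hR ⟨y, hy, rfl⟩; linarith⟩
  set t : ℝ := R / ε with ht
  have htpos : 0 < t := div_pos hRpos hε
  have htε : t * ε = R := div_mul_cancel₀ R hε.ne'
  refine ⟨t • ω, ?_, ?_⟩
  · exact interior_maximal (hscale t htpos) Metric.isOpen_ball (by simp [Metric.mem_ball, htpos, mul_pos htpos hε])
  · intro y hy
    -- y + t•ω = x₀ + ((y - x₀) + t•ω), and (y-x₀)+t•ω ∈ interior P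
    have hmem : (y - x₀) + t • ω ∈ interior P := by
      apply interior_maximal (hscale t htpos) Metric.isOpen_ball
      rw [Metric.mem_ball, dist_eq_norm]
      simpa [htε] using hRK y hy
    have hsub : ∀ z ∈ interior P, x₀ + z ∈ interior A := by
      intro z hz
      have h1 : P ⊆ (fun w => x₀ + w) ⁻¹' A := fun p hp => hAmod x₀ hx₀ p hp
      have h2 := interior_mono h1 hz
      rw [show (fun w => x₀ + w) = ⇑(Homeomorph.addLeft x₀) from rfl,
        ← Homeomorph.preimage_interior] at h2
      simpa using h2
    have heq : y + t • ω = x₀ + ((y - x₀) + t • ω) := by abel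
    rw [heq]
    exact hsub _ hmem
end

section
/- Let P ⊆ ℝ^d be a closed convex cone spanning ℝ^d with P ∩ (−P) = {0}, let Ω be the interior of P, and let A be a P-module. Then the set {f ∈ L²(ℝ^d) : there exists a ∈ Ω with f = 0 almost everywhere on (A − a)ᶜ} is dense in L²(ℝ^d). (This expresses that the left regular representation of ℝ^d on L²(ℝ^d) is the minimal unitary dilation of the isometric representation V^A.) -/
/-!
Pick `a` in the interior of `P`; it exists because `P` is a convex set containing `0` and
spanning the space. For `x₀ ∈ A` and any `y`, the points `a + n⁻¹ • (y - x₀)` tend to `a`, so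
`n • a + (y - x₀) ∈ P` for large `n`, i.e. `y ∈ A - n • a`. Thus every point eventually lies in
the translates `A - n • a`, and by dominated convergence the truncations of `f ∈ L²` to these
translates converge to `f`; each truncation vanishes outside `A - n • a` with `n • a ∈ Ω`.
-/

open MeasureTheory Filter Topology Set
open scoped ENNReal

theorem Convex.interior_nonempty_of_span_eq_top {E : Type*} [NormedAddCommGroup E]
    [NormedSpace ℝ E] [FiniteDimensional ℝ E] {P : Set E} (hconv : Convex ℝ P)
    (h0 : (0 : E) ∈ P) (hspan : Submodule.span ℝ P = ⊤) : (interior P).Nonempty := by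
  rw [hconv.interior_nonempty_iff_affineSpan_eq_top,
    AffineSubspace.affineSpan_eq_top_iff_vectorSpan_eq_top_of_nonempty _ _ _ ⟨0, h0⟩,
    vectorSpan_eq_span_vsub_set_right ℝ h0]
  simpa using hspan

theorem image_sub_const_eq_preimage_add {E : Type*} [AddGroup E] (A : Set E) (c : E) :
    (fun x => x - c) '' A = (· + c) ⁻¹' A := by
  ext y
  simp [sub_eq_iff_eq_add]

section Cone

variable {E : Type*} [AddCommGroup E] [TopologicalSpace E] [Module ℝ E] {P : Set E}

open scoped Pointwise in
theorem smul_mem_interior_of_pos [ContinuousConstSMul ℝ E]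
    (hP : ∀ t : ℝ, 0 < t → ∀ x ∈ P, t • x ∈ P) {t : ℝ} (ht : 0 < t) {x : E}
    (hx : x ∈ interior P) : t • x ∈ interior P := by
  have hsub : t • interior P ⊆ interior P := by
    rw [← interior_smul₀ ht.ne']
    exact interior_mono (smul_set_subset_iff.2 fun y hy => hP t ht y hy)
  exact hsub (smul_mem_smul_set hx)

theorem eventually_smul_add_mem_interior [IsTopologicalAddGroup E] [ContinuousSMul ℝ E]
    (hP : ∀ t : ℝ, 0 < t → ∀ x ∈ P, t • x ∈ P) {a : E} (ha : a ∈ interior P) (v : E) :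
    ∀ᶠ t : ℝ in atTop, t • a + v ∈ interior P := by
  have hlim : Tendsto (fun t : ℝ => a + t⁻¹ • v) atTop (𝓝 a) := by
    simpa using tendsto_const_nhds.add ((tendsto_inv_atTop_zero (𝕜 := ℝ)).smul_const v)
  filter_upwards [hlim (isOpen_interior.mem_nhds ha), eventually_gt_atTop 0] with t hmem ht
  simpa [smul_add, smul_inv_smul₀ ht.ne'] using smul_mem_interior_of_pos hP ht hmem

end Cone

section Truncation

variable {α E ι : Type*} [MeasurableSpace α] {μ : Measure α} [NormedAddCommGroup E]
  {p : ℝ≥0∞} {l : Filter ι} [l.IsCountablyGenerated] {s : ι → Set α}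

theorem tendsto_eLpNorm_indicator_compl {f : α → E} (hf : MemLp f p μ) (hp : p ≠ ∞)
    (hp0 : p ≠ 0) (hs : ∀ i, MeasurableSet (s i)) (hmem : ∀ᵐ x ∂μ, ∀ᶠ i in l, x ∈ s i) :
    Tendsto (fun i => eLpNorm ((s i)ᶜ.indicator f) p μ) l (𝓝 0) := by
  have hp' : 0 < p.toReal := ENNReal.toReal_pos hp0 hp
  have hint : Tendsto (fun i => ∫⁻ x, (s i)ᶜ.indicator (fun x => ‖f x‖ₑ ^ p.toReal) x ∂μ) l
      (𝓝 0) := by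
    have hmeas : AEMeasurable (fun x => ‖f x‖ₑ ^ p.toReal) μ :=
      hf.aestronglyMeasurable.enorm.pow_const _
    simpa using tendsto_lintegral_filter_of_dominated_convergence' (f := fun _ => 0)
      (fun x => ‖f x‖ₑ ^ p.toReal) (.of_forall fun i => hmeas.indicator (hs i).compl)
      (.of_forall fun i => .of_forall fun x => indicator_le_self _ _ x)
      (lintegral_rpow_enorm_lt_top_of_eLpNorm_lt_top hp0 hp hf.eLpNorm_lt_top).ne
      (hmem.mono fun x hx => tendsto_const_nhds.congr' (hx.mono fun i hi => by simp [hi]))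
  have hroot := (ENNReal.continuous_rpow_const (y := p.toReal⁻¹)).tendsto 0 |>.comp hint
  rw [ENNReal.zero_rpow_of_pos (inv_pos.2 hp')] at hroot
  refine hroot.congr fun i => ?_
  rw [eLpNorm_eq_lintegral_rpow_enorm_toReal hp0 hp, one_div, Function.comp_apply]
  congr 2 with x
  by_cases hx : x ∈ s i <;> simp [hx, ENNReal.zero_rpow_of_pos hp']

theorem Lp.tendsto_indicator_toLp [Fact (1 ≤ p)] (hp : p ≠ ∞) (f : Lp E p μ)
    (hs : ∀ i, MeasurableSet (s i)) (hmem : ∀ᵐ x ∂μ, ∀ᶠ i in l, x ∈ s i) :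
    Tendsto (fun i => ((Lp.memLp f).indicator (hs i)).toLp ((s i).indicator f)) l (𝓝 f) := by
  rw [Lp.tendsto_Lp_iff_tendsto_eLpNorm']
  refine (tendsto_eLpNorm_indicator_compl (Lp.memLp f) hp
    (zero_lt_one.trans_le Fact.out).ne' hs hmem).congr fun i => ?_
  rw [← eLpNorm_neg]
  refine eLpNorm_congr_ae ?_
  filter_upwards [((Lp.memLp f).indicator (hs i)).coeFn_toLp] with x hx
  simp [hx, indicator_compl]

end Truncation

theorem dense_union_translates_general {d : ℕ}
    (P : Set (EuclideanSpace ℝ (Fin d)))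
    (hPadd : ∀ x ∈ P, ∀ y ∈ P, x + y ∈ P)
    (hPsmul : ∀ (t : ℝ), 0 ≤ t → ∀ x ∈ P, t • x ∈ P)
    (hPspan : Submodule.span ℝ P = ⊤)
    (hPpointed : P ∩ (-P) = {0})
    (A : Set (EuclideanSpace ℝ (Fin d)))
    (hAne : A.Nonempty) (hAclosed : IsClosed A)
    (hAmod : ∀ x ∈ A, ∀ p ∈ P, x + p ∈ A) :
    Dense {f : Lp ℂ 2 (volume : Measure (EuclideanSpace ℝ (Fin d))) |
      ∃ a ∈ interior P, ∀ᵐ y ∂(volume : Measure (EuclideanSpace ℝ (Fin d))),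
        y ∉ (fun x => x - a) '' A → f y = 0} := by
  have hPconv : Convex ℝ P := fun x hx y hy s t hs ht _ =>
    hPadd _ (hPsmul s hs x hx) _ (hPsmul t ht y hy)
  have h0 : (0 : EuclideanSpace ℝ (Fin d)) ∈ P := (hPpointed.symm.subset rfl).1
  have hcone : ∀ t : ℝ, 0 < t → ∀ x ∈ P, t • x ∈ P := fun t ht => hPsmul t ht.le
  obtain ⟨a, ha⟩ := hPconv.interior_nonempty_of_span_eq_top h0 hPspan
  obtain ⟨x₀, hx₀⟩ := hAne
  set s : ℕ → Set (EuclideanSpace ℝ (Fin d)) := fun n => (fun x => x - (n : ℝ) • a) '' A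
  have hs : ∀ n, MeasurableSet (s n) := fun n => by
    simp only [s, image_sub_const_eq_preimage_add]
    exact (hAclosed.preimage (continuous_add_const _)).measurableSet
  have hexhaust : ∀ y, ∀ᶠ n : ℕ in atTop, y ∈ s n := fun y => by
    filter_upwards [tendsto_natCast_atTop_atTop.eventually
      (eventually_smul_add_mem_interior hcone ha (y - x₀))] with n hn
    simp only [s, image_sub_const_eq_preimage_add, mem_preimage]
    convert hAmod x₀ hx₀ _ (interior_subset hn) using 1
    abel
  have hint : ∀ᶠ n : ℕ in atTop, (n : ℝ) • a ∈ interior P := by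
    simpa using tendsto_natCast_atTop_atTop.eventually (eventually_smul_add_mem_interior hcone ha 0)
  intro f
  refine mem_closure_of_tendsto (Lp.tendsto_indicator_toLp ENNReal.ofNat_ne_top f hs
    (.of_forall hexhaust)) ?_
  filter_upwards [hint] with n hn
  refine ⟨_, hn, ?_⟩
  filter_upwards [((Lp.memLp f).indicator (hs n)).coeFn_toLp] with y hy hys
  rw [hy, indicator_of_notMem hys]

/-- Let `P ⊆ ℝ^d` be a closed convex cone spanning `ℝ^d` with `P ∩ (−P) = {0}`
and interior `Ω`, and let `A` be a `P`-module. Then the set of `f ∈ L²(ℝ^d)` vanishing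
a.e. outside `A − a` for some `a ∈ Ω` is dense in `L²(ℝ^d)`. -/
theorem dense_union_translates {d : ℕ}
    (P : Set (EuclideanSpace ℝ (Fin d)))
    (hPclosed : IsClosed P)
    (hPadd : ∀ x ∈ P, ∀ y ∈ P, x + y ∈ P)
    (hPsmul : ∀ (t : ℝ), 0 ≤ t → ∀ x ∈ P, t • x ∈ P)
    (hPspan : Submodule.span ℝ P = ⊤)
    (hPpointed : P ∩ (-P) = {0})
    (A : Set (EuclideanSpace ℝ (Fin d)))
    (hAne : A.Nonempty) (hAproper : A ≠ Set.univ) (hAclosed : IsClosed A)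
    (hAmod : ∀ x ∈ A, ∀ p ∈ P, x + p ∈ A) :
    Dense {f : Lp ℂ 2 (volume : Measure (EuclideanSpace ℝ (Fin d))) |
      ∃ a ∈ interior P, ∀ᵐ y ∂(volume : Measure (EuclideanSpace ℝ (Fin d))),
        y ∉ (fun x => x - a) '' A → f y = 0} :=
  dense_union_translates_general P hPadd hPsmul hPspan hPpointed A hAne hAclosed hAmod
end

section
/- Let P ⊆ ℝ^d be a closed convex cone spanning ℝ^d with P ∩ (−P) = {0}, let Ω be the interior of P, let A be a P-module, and set B = −(interior(A))ᶜ = {−x : x ∉ interior(A)}. Let N : L²(ℝ^d) → L²(ℝ^d) be the composition with negation, (Nf)(y) = f(−y), which is a linear isometric equivalence. Then N maps the orthogonal complement (H_A)^⊥ = {f ∈ L²(ℝ^d) : f = 0 a.e. on A} onto H_B, and for every a ∈ Ω and every f ∈ (H_A)^⊥ one has N(τ_{−a} f) = τ_a (N f). In particular, the opposite representation of V^A (given by the operators τ_{−a}, a ∈ Ω, restricted to (H_A)^⊥) is unitarily equivalent to V^B. -/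
/-!
Reflection `y ↦ -y` carries `{f | f = 0 a.e. on A}` onto `{g | g = 0 a.e. on -A}`, and
`-A` differs from `Bᶜ = -interior A` only by the reflected frontier of `A`. That frontier is
null: for `a ∈ Ω` and `t > 0` the translate `∂A + t • a` lies in `A + Ω ⊆ interior A`, so the
translates `∂A + t • a` are pairwise disjoint, which a Haar measure only allows for null sets.
The set `Ω` is nonempty because `P` is a convex set whose affine span is everything.
The intertwining relation is the pointwise identity `-y - (-a) = -(y - a)`.
-/

open MeasureTheory

-- Closed before the final theorem: under `Pointwise`, its `-P` would elaborate through a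
-- different (defeq) instance.
section

open Set Filter Function
open scoped Pointwise ENNReal

theorem add_mem_interior_of_add_mem {E : Type*} [AddGroup E] [TopologicalSpace E]
    [ContinuousAdd E] {P A : Set E} (hA : ∀ x ∈ A, ∀ p ∈ P, x + p ∈ A)
    {x : E} (hx : x ∈ A) {w : E} (hw : w ∈ interior P) : x + w ∈ interior A := by
  have hsub : x +ᵥ interior P ⊆ interior A := by
    rw [← interior_vadd]
    exact interior_mono (vadd_set_subset_iff.2 fun p hp => hA x hx p hp)
  exact hsub (vadd_mem_vadd_set hw)

section NullFrontier

variable {E : Type*} [NormedAddCommGroup E] [NormedSpace ℝ E]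

theorem interior_nonempty_of_span_eq_top [FiniteDimensional ℝ E] {P : Set E} (h0 : (0 : E) ∈ P)
    (hadd : ∀ x ∈ P, ∀ y ∈ P, x + y ∈ P) (hsmul : ∀ t : ℝ, 0 ≤ t → ∀ x ∈ P, t • x ∈ P)
    (hspan : Submodule.span ℝ P = ⊤) : (interior P).Nonempty := by
  have hconvex : Convex ℝ P := fun x hx y hy s t hs ht _ =>
    hadd _ (hsmul s hs x hx) _ (hsmul t ht y hy)
  rw [hconvex.interior_nonempty_iff_affineSpan_eq_top,
    AffineSubspace.affineSpan_eq_top_iff_vectorSpan_eq_top_of_nonempty ℝ E E ⟨0, h0⟩,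
    vectorSpan_eq_span_vsub_set_right ℝ h0]
  simpa using hspan

theorem smul_mem_interior_of_smul_mem {P : Set E} (hsmul : ∀ t : ℝ, 0 ≤ t → ∀ x ∈ P, t • x ∈ P)
    {t : ℝ} (ht : 0 < t) {x : E} (hx : x ∈ interior P) : t • x ∈ interior P := by
  have hsub : t • interior P ⊆ interior P := by
    rw [← interior_smul₀ ht.ne']
    exact interior_mono (smul_set_subset_iff.2 fun y hy => hsmul t ht.le y hy)
  exact hsub (smul_mem_smul_set hx)

variable [MeasurableSpace E] [BorelSpace E] [FiniteDimensional ℝ E]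
  (μ : Measure E) [μ.IsAddHaarMeasure]

theorem addHaar_eq_zero_of_add_smul_notMem {s : Set E} (hs : MeasurableSet s) (a : E)
    (h : ∀ x ∈ s, ∀ t : ℝ, 0 < t → x + t • a ∉ s) : μ s = 0 := by
  refine Measure.addHaar_eq_zero_of_disjoint_translates μ (fun n : ℕ => (1 / (n + 1 : ℝ)) • a)
    ?_ ?_ hs
  · refine isBounded_iff_forall_norm_le.2 ⟨‖a‖, ?_⟩
    rintro _ ⟨n, rfl⟩
    rw [norm_smul, Real.norm_of_nonneg (by positivity)]
    exact mul_le_of_le_one_left (norm_nonneg a) (div_le_one_of_le₀ (by simp) (by positivity))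
  · refine (pairwise_disjoint_on _).2 fun m n hmn => Set.disjoint_left.2 ?_
    rintro _ ⟨_, rfl, x, hx, rfl⟩ ⟨_, rfl, y, hy, hxy⟩
    have hlt : (1 / (n + 1 : ℝ)) < 1 / (m + 1) := by gcongr
    refine h x hx _ (sub_pos.2 hlt) ?_
    convert hy using 1
    simp only at hxy
    rw [sub_smul]
    linear_combination (norm := abel) -hxy

theorem addHaar_frontier_eq_zero_of_add_mem {P A : Set E}
    (hsmul : ∀ t : ℝ, 0 ≤ t → ∀ x ∈ P, t • x ∈ P) (hP : (interior P).Nonempty)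
    (hA : IsClosed A) (hAP : ∀ x ∈ A, ∀ p ∈ P, x + p ∈ A) : μ (frontier A) = 0 := by
  obtain ⟨a, ha⟩ := hP
  refine addHaar_eq_zero_of_add_smul_notMem μ isClosed_frontier.measurableSet a
    fun x hx t ht hxt => hxt.2 ?_
  exact add_mem_interior_of_add_mem hAP (hA.frontier_subset hx)
    (smul_mem_interior_of_smul_mem hsmul ht ha)

end NullFrontier

theorem ae_mem_imp_congr {α : Type*} [MeasurableSpace α] {μ : Measure α} {s t : Set α}
    (hst : s =ᵐ[μ] t) (q : α → Prop) : (∀ᵐ y ∂μ, y ∈ s → q y) ↔ ∀ᵐ y ∂μ, y ∈ t → q y :=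
  eventually_congr (hst.mono fun y hy => by rw [show (y ∈ s) = (y ∈ t) from hy])

section Reflection

variable {G : Type*} [MeasurableSpace G] [AddCommGroup G] [MeasurableNeg G]
  {μ : Measure G} [μ.IsNegInvariant]

theorem ae_comp_neg_iff {q : G → Prop} : (∀ᵐ y ∂μ, q (-y)) ↔ ∀ᵐ y ∂μ, q y := by
  conv_rhs => rw [← μ.map_neg_eq_self]
  exact (MeasurableEquiv.neg G).measurableEmbedding.ae_map_iff.symm

theorem ae_mem_imp_eq_zero_iff_of_ae_eq_comp_neg {M : Type*} [Zero M] {f g : G → M}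
    (hg : g =ᵐ[μ] fun y => f (-y)) (S : Set G) :
    (∀ᵐ y ∂μ, y ∈ S → f y = 0) ↔ ∀ᵐ y ∂μ, y ∈ -S → g y = 0 := by
  rw [← ae_comp_neg_iff]
  exact eventually_congr (hg.mono fun y hy => by simp [hy, Set.mem_neg])

variable {F : Type*} [NormedAddCommGroup F] {p : ℝ≥0∞}

theorem image_setOf_ae_mem_imp_eq_zero_of_ae_eq_comp_neg (N : Lp F p μ → Lp F p μ)
    (hNbij : Bijective N) (hN : ∀ f, N f =ᵐ[μ] fun y => f (-y)) (S : Set G) :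
    N '' {f | ∀ᵐ y ∂μ, y ∈ S → f y = 0} = {g | ∀ᵐ y ∂μ, y ∈ -S → g y = 0} := by
  ext g
  obtain ⟨f, rfl⟩ := hNbij.2 g
  rw [hNbij.1.mem_set_image]
  exact ae_mem_imp_eq_zero_iff_of_ae_eq_comp_neg (hN f) S

theorem reflection_translate_neg_eq [MeasurableAdd G] [μ.IsAddRightInvariant]
    (N : Lp F p μ → Lp F p μ) (hN : ∀ f, N f =ᵐ[μ] fun y => f (-y))
    (τ : G → Lp F p μ → Lp F p μ) (hτ : ∀ x f, τ x f =ᵐ[μ] fun y => f (y - x))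
    (a : G) (f : Lp F p μ) : N (τ (-a) f) = τ a (N f) := by
  have hneg := (Measure.measurePreserving_neg μ).quasiMeasurePreserving
  have hsub := (measurePreserving_sub_right μ a).quasiMeasurePreserving
  apply Lp.ext
  calc N (τ (-a) f) =ᵐ[μ] fun y => τ (-a) f (-y) := hN _
    _ =ᵐ[μ] fun y => f (-y - -a) := hneg.ae_eq (hτ (-a) f)
    _ = fun y => f (-(y - a)) := by simp only [neg_sub, sub_neg_eq_add, neg_add_eq_sub]
    _ =ᵐ[μ] fun y => N f (y - a) := (hsub.ae_eq (hN f)).symm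
    _ =ᵐ[μ] τ a (N f) := (hτ a _).symm

end Reflection

end

theorem opposite_representation_equivalent_general {d : ℕ}
    (P : Set (EuclideanSpace ℝ (Fin d)))
    (hPadd : ∀ x ∈ P, ∀ y ∈ P, x + y ∈ P)
    (hPsmul : ∀ (t : ℝ), 0 ≤ t → ∀ x ∈ P, t • x ∈ P)
    (hPspan : Submodule.span ℝ P = ⊤)
    (hPpointed : P ∩ (-P) = {0})
    (A : Set (EuclideanSpace ℝ (Fin d)))
    (hAclosed : IsClosed A)
    (hAmod : ∀ x ∈ A, ∀ p ∈ P, x + p ∈ A)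
    (N : Lp ℂ 2 (volume : Measure (EuclideanSpace ℝ (Fin d))) ≃ₗᵢ[ℂ]
         Lp ℂ 2 (volume : Measure (EuclideanSpace ℝ (Fin d))))
    (hN : ∀ f : Lp ℂ 2 (volume : Measure (EuclideanSpace ℝ (Fin d))),
      ⇑(N f) =ᵐ[volume] fun y => f (-y))
    (τ : EuclideanSpace ℝ (Fin d) →
      (Lp ℂ 2 (volume : Measure (EuclideanSpace ℝ (Fin d))) ≃ₗᵢ[ℂ]
       Lp ℂ 2 (volume : Measure (EuclideanSpace ℝ (Fin d)))))
    (hτ : ∀ x, ∀ f : Lp ℂ 2 (volume : Measure (EuclideanSpace ℝ (Fin d))),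
      ⇑(τ x f) =ᵐ[volume] fun y => f (y - x)) :
    (⇑N '' {f : Lp ℂ 2 (volume : Measure (EuclideanSpace ℝ (Fin d))) |
          ∀ᵐ y ∂(volume : Measure (EuclideanSpace ℝ (Fin d))), y ∈ A → f y = 0}
        = {f : Lp ℂ 2 (volume : Measure (EuclideanSpace ℝ (Fin d))) |
          ∀ᵐ y ∂(volume : Measure (EuclideanSpace ℝ (Fin d))),
            y ∉ (fun x => -x) '' (interior A)ᶜ → f y = 0}) ∧
    ∀ a ∈ interior P, ∀ f : Lp ℂ 2 (volume : Measure (EuclideanSpace ℝ (Fin d))),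
      (∀ᵐ y ∂(volume : Measure (EuclideanSpace ℝ (Fin d))), y ∈ A → f y = 0) →
        N (τ (-a) f) = τ a (N f) := by
  have h0P : (0 : EuclideanSpace ℝ (Fin d)) ∈ P := (hPpointed.symm.subset rfl).1
  have hfrontier : volume (frontier A) = 0 := addHaar_frontier_eq_zero_of_add_mem volume hPsmul
    (interior_nonempty_of_span_eq_top h0P hPadd hPsmul hPspan) hAclosed hAmod
  refine ⟨?_, fun a _ f _ => reflection_translate_neg_eq N hN (fun x => τ x) hτ a f⟩
  calc ⇑N '' {f | ∀ᵐ y, y ∈ A → f y = 0}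
      = ⇑N '' {f | ∀ᵐ y, y ∈ interior A → f y = 0} := by
        simp_rw [ae_mem_imp_congr (interior_ae_eq_of_null_frontier hfrontier)]
    _ = {g | ∀ᵐ y, y ∈ -interior A → g y = 0} :=
        image_setOf_ae_mem_imp_eq_zero_of_ae_eq_comp_neg N N.bijective hN _
    _ = _ := by simp only [Set.image_neg_eq_neg, Set.mem_neg, Set.mem_compl_iff, not_not]

/-- Let `P ⊆ ℝ^d` be a closed convex cone spanning `ℝ^d` with `P ∩ (−P) = {0}`
and interior `Ω`, let `A` be a `P`-module and set `B = −(interior A)ᶜ`. Let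
`N : L²(ℝ^d) ≃ L²(ℝ^d)` be composition with negation, `(N f)(y) = f (−y)`, and let
`τ_x` be the translation unitaries, `(τ_x f)(y) = f (y − x)`. Then `N` maps
`(H_A)ᗮ = {f : f = 0 a.e. on A}` onto `H_B = {f : f = 0 a.e. on Bᶜ}`, and
`N (τ_{−a} f) = τ_a (N f)` for all `a ∈ Ω` and `f ∈ (H_A)ᗮ`. -/
theorem opposite_representation_equivalent {d : ℕ}
    (P : Set (EuclideanSpace ℝ (Fin d)))
    (hPclosed : IsClosed P)
    (hPadd : ∀ x ∈ P, ∀ y ∈ P, x + y ∈ P)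
    (hPsmul : ∀ (t : ℝ), 0 ≤ t → ∀ x ∈ P, t • x ∈ P)
    (hPspan : Submodule.span ℝ P = ⊤)
    (hPpointed : P ∩ (-P) = {0})
    (A : Set (EuclideanSpace ℝ (Fin d)))
    (hAne : A.Nonempty) (hAproper : A ≠ Set.univ) (hAclosed : IsClosed A)
    (hAmod : ∀ x ∈ A, ∀ p ∈ P, x + p ∈ A)
    (N : Lp ℂ 2 (volume : Measure (EuclideanSpace ℝ (Fin d))) ≃ₗᵢ[ℂ]
         Lp ℂ 2 (volume : Measure (EuclideanSpace ℝ (Fin d))))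
    (hN : ∀ f : Lp ℂ 2 (volume : Measure (EuclideanSpace ℝ (Fin d))),
      ⇑(N f) =ᵐ[volume] fun y => f (-y))
    (τ : EuclideanSpace ℝ (Fin d) →
      (Lp ℂ 2 (volume : Measure (EuclideanSpace ℝ (Fin d))) ≃ₗᵢ[ℂ]
       Lp ℂ 2 (volume : Measure (EuclideanSpace ℝ (Fin d)))))
    (hτ : ∀ x, ∀ f : Lp ℂ 2 (volume : Measure (EuclideanSpace ℝ (Fin d))),
      ⇑(τ x f) =ᵐ[volume] fun y => f (y - x)) :
    (⇑N '' {f : Lp ℂ 2 (volume : Measure (EuclideanSpace ℝ (Fin d))) |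
          ∀ᵐ y ∂(volume : Measure (EuclideanSpace ℝ (Fin d))), y ∈ A → f y = 0}
        = {f : Lp ℂ 2 (volume : Measure (EuclideanSpace ℝ (Fin d))) |
          ∀ᵐ y ∂(volume : Measure (EuclideanSpace ℝ (Fin d))),
            y ∉ (fun x => -x) '' (interior A)ᶜ → f y = 0}) ∧
    ∀ a ∈ interior P, ∀ f : Lp ℂ 2 (volume : Measure (EuclideanSpace ℝ (Fin d))),
      (∀ᵐ y ∂(volume : Measure (EuclideanSpace ℝ (Fin d))), y ∈ A → f y = 0) →
        N (τ (-a) f) = τ a (N f) :=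
  opposite_representation_equivalent_general P hPadd hPsmul hPspan hPpointed A hAclosed hAmod N hN τ
    hτ
end

section
/- Let d ≥ 2 and let P ⊆ ℝ^d be a closed convex cone spanning ℝ^d with P ∩ (−P) = {0}, and let Ω be the interior of P. Then P and −(Ωᶜ) are not translates of each other: for every z ∈ ℝ^d, P ≠ {−x + z : x ∈ ℝ^d, x ∉ Ω}. -/
/-!
Since `P` is a cone, `y ∉ P` forces `t • y ∉ P` for every `t > 0`, so the translate equation puts
`z - t • y` in `Ω ⊆ P`; dividing by `t` and letting `t → ∞` gives `-y ∈ P`. Hence `P ∪ -P` is the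
whole space. Then `P` and `-P` are closed sets covering `{0}ᶜ` that meet only at `0`, which
contradicts the connectedness of `{0}ᶜ` in dimension at least two.
-/

open Filter Set Topology

section TopologicalVectorSpace

variable {E : Type*} [AddCommGroup E] [Module ℝ E] [TopologicalSpace E]

theorem neg_mem_of_forall_sub_smul_mem [ContinuousSMul ℝ E] [ContinuousSub E] {P : Set E}
    (hPclosed : IsClosed P) (hPsmul : ∀ t : ℝ, 0 ≤ t → ∀ x ∈ P, t • x ∈ P) {a b : E}
    (h : ∀ t : ℝ, 0 < t → a - t • b ∈ P) : -b ∈ P := by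
  have hscaled : ∀ t : ℝ, 0 < t → t⁻¹ • a - b ∈ P := fun t ht => by
    simpa [smul_sub, smul_smul, inv_mul_cancel₀ ht.ne'] using hPsmul t⁻¹ (by positivity) _ (h t ht)
  have hlim : Tendsto (fun t : ℝ => t⁻¹ • a - b) atTop (𝓝 (-b)) := by
    simpa using ((tendsto_inv_atTop_zero (𝕜 := ℝ)).smul_const a).sub_const b
  exact hPclosed.mem_of_tendsto hlim (eventually_gt_atTop 0 |>.mono hscaled)

theorem union_neg_eq_univ_of_eq_image_compl_interior [IsTopologicalAddGroup E]
    [ContinuousSMul ℝ E] {P : Set E} (hPclosed : IsClosed P)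
    (hPsmul : ∀ t : ℝ, 0 ≤ t → ∀ x ∈ P, t • x ∈ P) {z : E}
    (hPz : P = (fun x => -x + z) '' (interior P)ᶜ) : P ∪ -P = univ := by
  refine eq_univ_of_forall fun y => or_iff_not_imp_left.2 fun hy => ?_
  refine Set.mem_neg.2 (neg_mem_of_forall_sub_smul_mem hPclosed hPsmul (a := z) fun t ht => ?_)
  have hty : t • y ∉ P := fun h => hy (by
    simpa [smul_smul, inv_mul_cancel₀ ht.ne'] using hPsmul t⁻¹ (by positivity) _ h)
  by_contra hout
  exact hty (hPz ▸ ⟨z - t • y, fun hint => hout (interior_subset hint), by simp⟩)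

theorem inter_neg_ne_singleton_zero_of_union_neg_eq_univ [IsTopologicalAddGroup E]
    [ContinuousSMul ℝ E] (hE : 1 < Module.rank ℝ E) {P : Set E} (hPclosed : IsClosed P)
    (hcover : P ∪ -P = univ) :
    P ∩ -P ≠ {0} := by
  intro hpointed
  have hconn := isConnected_compl_singleton_of_one_lt_rank hE (0 : E)
  obtain ⟨u, hu⟩ := hconn.nonempty
  have hu' : -u ∈ ({0}ᶜ : Set E) := by simpa using hu
  have hboth : ({0}ᶜ ∩ P).Nonempty ∧ ({0}ᶜ ∩ -P).Nonempty := by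
    rcases (eq_univ_iff_forall.1 hcover u) with huP | huP
    · exact ⟨⟨u, hu, huP⟩, ⟨-u, hu', by simpa using huP⟩⟩
    · exact ⟨⟨-u, hu', huP⟩, ⟨u, hu, huP⟩⟩
  obtain ⟨x, hx0, hx⟩ := isPreconnected_closed_iff.1 hconn.isPreconnected P (-P) hPclosed
    hPclosed.neg (by simp [hcover]) hboth.1 hboth.2
  exact hx0 (hpointed ▸ hx)

end TopologicalVectorSpace

theorem cone_not_translate_of_neg_compl_interior_general {d : ℕ} (hd : 2 ≤ d)
    (P : Set (EuclideanSpace ℝ (Fin d)))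
    (hPclosed : IsClosed P)
    (hPsmul : ∀ (t : ℝ), 0 ≤ t → ∀ x ∈ P, t • x ∈ P)
    (hPpointed : P ∩ (-P) = {0}) :
    ∀ z : EuclideanSpace ℝ (Fin d), P ≠ (fun x => -x + z) '' (interior P)ᶜ := by
  intro z hPz
  have hrank : 1 < Module.rank ℝ (EuclideanSpace ℝ (Fin d)) := by
    rw [← Module.finrank_eq_rank, finrank_euclideanSpace_fin]
    exact_mod_cast hd
  exact inter_neg_ne_singleton_zero_of_union_neg_eq_univ hrank hPclosed
    (union_neg_eq_univ_of_eq_image_compl_interior hPclosed hPsmul hPz) hPpointed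

/-- For `d ≥ 2` and a closed convex cone `P ⊆ ℝ^d` spanning `ℝ^d` with
`P ∩ (−P) = {0}` (with interior `Ω`), `P` and `−(Ωᶜ)` are not translates of each other. -/
theorem cone_not_translate_of_neg_compl_interior {d : ℕ} (hd : 2 ≤ d)
    (P : Set (EuclideanSpace ℝ (Fin d)))
    (hPclosed : IsClosed P)
    (hPadd : ∀ x ∈ P, ∀ y ∈ P, x + y ∈ P)
    (hPsmul : ∀ (t : ℝ), 0 ≤ t → ∀ x ∈ P, t • x ∈ P)
    (hPspan : Submodule.span ℝ P = ⊤)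
    (hPpointed : P ∩ (-P) = {0}) :
    ∀ z : EuclideanSpace ℝ (Fin d), P ≠ (fun x => -x + z) '' (interior P)ᶜ :=
  cone_not_translate_of_neg_compl_interior_general hd P hPclosed hPsmul hPpointed
end

section
/- Let d ≥ 2 and let P ⊆ ℝ^d be a closed convex cone spanning ℝ^d with P ∩ (−P) = {0}, and let Ω be the interior of P. Then the complement Ωᶜ = ℝ^d \ Ω has no extreme points: the set of extreme points of Ωᶜ is empty. -/
/-- For `d ≥ 2` and a closed convex cone `P ⊆ ℝ^d` spanning `ℝ^d` with
`P ∩ (−P) = {0}` (with interior `Ω`), the complement `Ωᶜ` has no extreme points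
(in the midpoint sense). -/
theorem extremePoints_compl_interior_empty {d : ℕ} (hd : 2 ≤ d)
    (P : Set (EuclideanSpace ℝ (Fin d)))
    (hPclosed : IsClosed P)
    (hPadd : ∀ x ∈ P, ∀ y ∈ P, x + y ∈ P)
    (hPsmul : ∀ (t : ℝ), 0 ≤ t → ∀ x ∈ P, t • x ∈ P)
    (hPspan : Submodule.span ℝ P = ⊤)
    (hPpointed : P ∩ (-P) = {0}) :
    {x : EuclideanSpace ℝ (Fin d) |
        x ∈ (interior P)ᶜ ∧ ∀ y ∈ (interior P)ᶜ, ∀ z ∈ (interior P)ᶜ,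
          x = (1 / 2 : ℝ) • (y + z) → y = x ∧ z = x} = ∅ := by
  -- P is convex
  have hPconv : Convex ℝ P := by
    intro x hx y hy a b ha hb _
    exact hPadd _ (hPsmul a ha x hx) _ (hPsmul b hb y hy)
  have h0 : (0 : EuclideanSpace ℝ (Fin d)) ∈ P := by
    have : (0 : EuclideanSpace ℝ (Fin d)) ∈ P ∩ (-P) := hPpointed ▸ Set.mem_singleton 0
    exact this.1
  -- interior of P is nonempty
  have hspan : affineSpan ℝ P = ⊤ := by
    have : (affineSpan ℝ P : Set (EuclideanSpace ℝ (Fin d))) = (Submodule.span ℝ P : Set (EuclideanSpace ℝ (Fin d))) := by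
      rw [← affineSpan_insert_zero, Set.insert_eq_self.2 h0]
    apply SetLike.coe_injective
    rw [this, hPspan]
    simp
  have hΩne : (interior P).Nonempty :=
    (hPconv.interior_nonempty_iff_affineSpan_eq_top).2 hspan
  have hΩconv : Convex ℝ (interior P) := hPconv.interior
  ext x
  simp only [Set.mem_setOf_eq, Set.mem_empty_iff_false, iff_false, not_and]
  intro hx hext
  -- the complement of {x} is covered by interior P and its reflection
  have hcover : ({x}ᶜ : Set (EuclideanSpace ℝ (Fin d))) ⊆ interior P ∪ (fun w => (2 : ℝ) • x - w) ⁻¹' interior P := by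
    intro w hw
    by_contra hcon
    rw [Set.mem_union, not_or] at hcon
    have hmid : x = (1 / 2 : ℝ) • (w + ((2 : ℝ) • x - w)) := by
      module
    have := hext w hcon.1 ((2 : ℝ) • x - w) hcon.2 hmid
    exact hw (this.1 ▸ rfl)
  -- the two open sets are disjoint
  have hdisj : interior P ∩ (fun w => (2 : ℝ) • x - w) ⁻¹' interior P = ∅ := by
    by_contra hne
    obtain ⟨w, hw1, hw2⟩ := Set.nonempty_iff_ne_empty.2 hne
    have : x ∈ interior P := by
      have hmid : x = (1 / 2 : ℝ) • w + (1 / 2 : ℝ) • ((2 : ℝ) • x - w) := by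
        module
      have := hΩconv hw1 hw2 (by norm_num : (0:ℝ) ≤ 1/2) (by norm_num : (0:ℝ) ≤ 1/2)
        (by norm_num)
      rwa [← hmid] at this
    exact hx this
  -- {x}ᶜ is connected since d ≥ 2
  have hrank : (1 : Cardinal) < Module.rank ℝ (EuclideanSpace ℝ (Fin d)) := by
    have : Module.rank ℝ (EuclideanSpace ℝ (Fin d)) = (d : Cardinal) := by
      rw [← Module.finrank_eq_rank]
      norm_cast
      exact finrank_euclideanSpace_fin
    rw [this]
    exact_mod_cast lt_of_lt_of_le one_lt_two (by exact_mod_cast hd)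
  have hconn : IsConnected ({x}ᶜ : Set (EuclideanSpace ℝ (Fin d))) :=
    isConnected_compl_singleton_of_one_lt_rank hrank x
  -- reflection preimage is open and nonempty within {x}ᶜ
  have hopen2 : IsOpen ((fun w : EuclideanSpace ℝ (Fin d) => (2 : ℝ) • x - w) ⁻¹' interior P) :=
    isOpen_interior.preimage (by fun_prop)
  obtain ⟨p, hp⟩ := hΩne
  have hpx : p ≠ x := fun h => hx (h ▸ hp)
  have hqx : (2 : ℝ) • x - p ≠ x := by
    intro h
    apply hpx
    have : p = (2 : ℝ) • x - ((2 : ℝ) • x - p) := by module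
    rw [this, h]
    module
  have := hconn.isPreconnected _ _ isOpen_interior hopen2 hcover
    ⟨p, hpx, hp⟩
    ⟨(2 : ℝ) • x - p, hqx, by
      simp only [Set.mem_preimage]
      have : (2 : ℝ) • x - ((2 : ℝ) • x - p) = p := by module
      rwa [this]⟩
  obtain ⟨w, -, hw⟩ := this
  rw [Set.eq_empty_iff_forall_notMem] at hdisj
  exact hdisj w hw
end

section
/- Let P ⊆ ℝ^d be a closed convex cone spanning ℝ^d with P ∩ (−P) = {0}, and let A be a P-module. Then B := −(interior(A))ᶜ = {−x : x ∉ interior(A)} is again a P-module: B is nonempty, B ≠ ℝ^d, B is closed, and B + P ⊆ B. -/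
/-- For a closed convex cone `P ⊆ ℝ^d` spanning `ℝ^d` with `P ∩ (−P) = {0}`
and a `P`-module `A`, the set `B := −(interior A)ᶜ` is again a `P`-module. -/
theorem neg_compl_interior_is_module {d : ℕ}
    (P : Set (EuclideanSpace ℝ (Fin d)))
    (hPclosed : IsClosed P)
    (hPadd : ∀ x ∈ P, ∀ y ∈ P, x + y ∈ P)
    (hPsmul : ∀ (t : ℝ), 0 ≤ t → ∀ x ∈ P, t • x ∈ P)
    (hPspan : Submodule.span ℝ P = ⊤)
    (hPpointed : P ∩ (-P) = {0})
    (A : Set (EuclideanSpace ℝ (Fin d)))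
    (hAne : A.Nonempty) (hAproper : A ≠ Set.univ) (hAclosed : IsClosed A)
    (hAmod : ∀ x ∈ A, ∀ p ∈ P, x + p ∈ A) :
    ((fun x => -x) '' (interior A)ᶜ).Nonempty ∧
    (fun x => -x) '' (interior A)ᶜ ≠ Set.univ ∧
    IsClosed ((fun x => -x) '' (interior A)ᶜ) ∧
    ∀ b ∈ (fun x => -x) '' (interior A)ᶜ, ∀ p ∈ P, b + p ∈ (fun x => -x) '' (interior A)ᶜ := by
  -- 0 ∈ P
  have hPne : P.Nonempty := by
    by_contra h
    rw [Set.not_nonempty_iff_eq_empty] at h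
    rw [h, Submodule.span_empty] at hPspan
    have : Subsingleton (EuclideanSpace ℝ (Fin d)) := by
      constructor
      intro a b
      have ha : a ∈ (⊥ : Submodule ℝ (EuclideanSpace ℝ (Fin d))) := by
        rw [hPspan]; trivial
      have hb : b ∈ (⊥ : Submodule ℝ (EuclideanSpace ℝ (Fin d))) := by
        rw [hPspan]; trivial
      simp only [Submodule.mem_bot] at ha hb
      rw [ha, hb]
    exact hAproper (Set.eq_univ_of_forall fun x => hAne.elim fun a ha => (Subsingleton.elim x a ▸ ha))
  obtain ⟨x0, hx0⟩ := hPne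
  have h0P : (0 : EuclideanSpace ℝ (Fin d)) ∈ P := by
    have := hPsmul 0 le_rfl x0 hx0
    simpa using this
  -- P is convex
  have hPconv : Convex ℝ P := fun x hx y hy a b ha hb _ =>
    hPadd _ (hPsmul a ha x hx) _ (hPsmul b hb y hy)
  -- interior A is P-invariant
  have hmono : ∀ p ∈ P, ∀ x ∈ interior A, x + p ∈ interior A := by
    intro p hp x hx
    have h1 : (fun y => y + p) '' A ⊆ A := by
      rintro _ ⟨a, ha, rfl⟩; exact hAmod a ha p hp
    have h2 : (fun y => y + p) '' interior A = interior ((fun y => y + p) '' A) :=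
      (Homeomorph.addRight p).image_interior A
    exact interior_mono h1 (h2 ▸ ⟨x, hx, rfl⟩)
  -- interior P is nonempty
  have hPaff : affineSpan ℝ P = ⊤ := by
    rw [← AffineSubspace.coe_eq_univ_iff]
    have : (affineSpan ℝ (insert 0 P) : Set (EuclideanSpace ℝ (Fin d)))
        = Submodule.span ℝ P := affineSpan_insert_zero (k := ℝ) P
    rw [Set.insert_eq_self.mpr h0P] at this
    rw [this, hPspan]; rfl
  have hPint : (interior P).Nonempty :=
    (hPconv.interior_nonempty_iff_affineSpan_eq_top).mpr hPaff
  obtain ⟨q, hq⟩ := hPint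
  -- interior A is nonempty
  obtain ⟨a, ha⟩ := hAne
  have hAint : (interior A).Nonempty := by
    refine ⟨a + q, ?_⟩
    have h1 : (fun y => a + y) '' P ⊆ A := by
      rintro _ ⟨p, hp, rfl⟩; exact hAmod a ha p hp
    have h2 : (fun y => a + y) '' interior P = interior ((fun y => a + y) '' P) :=
      (Homeomorph.addLeft a).image_interior P
    exact interior_mono h1 (h2 ▸ ⟨q, hq, rfl⟩)
  refine ⟨?_, ?_, ?_, ?_⟩
  · -- nonempty
    have : Aᶜ.Nonempty := by
      rw [Set.nonempty_compl]; exact hAproper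
    obtain ⟨y, hy⟩ := this
    exact ⟨-y, y, fun h => hy (interior_subset h), rfl⟩
  · -- proper
    obtain ⟨z, hz⟩ := hAint
    intro h
    have : -z ∈ (fun x => -x) '' (interior A)ᶜ := h ▸ Set.mem_univ _
    obtain ⟨w, hw, hwz⟩ := this
    have : w = z := by
      have := neg_injective hwz
      exact this
    exact hw (this ▸ hz)
  · -- closed
    exact (Homeomorph.neg (EuclideanSpace ℝ (Fin d))).isClosedMap _
      isOpen_interior.isClosed_compl
  · -- module property
    rintro _ ⟨x, hx, rfl⟩ p hp
    refine ⟨x - p, ?_, by simp; abel⟩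
    intro h
    have := hmono p hp _ h
    simp only [sub_add_cancel] at this
    exact hx this
end

section
/- Let P ⊆ ℝ^d be a closed convex cone spanning ℝ^d with P ∩ (−P) = {0}, and let A be a P-module. If f ∈ L²(ℝ^d) satisfies, for every x ∈ P, f = 0 almost everywhere on (A + x)ᶜ, then f = 0 in L²(ℝ^d). Equivalently, ⋂_{x∈P} H_{A+x} = {0}; this says the isometric representation V^A associated to A is pure. -/
open MeasureTheory

/-- Auxiliary: every vector in the span of a cone closed under addition and nonnegative
scalar multiplication (containing 0) is a difference of two cone elements. -/
lemma cone_span_diff {d : ℕ} (P : Set (EuclideanSpace ℝ (Fin d)))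
    (hPadd : ∀ x ∈ P, ∀ y ∈ P, x + y ∈ P)
    (hPsmul : ∀ (t : ℝ), 0 ≤ t → ∀ x ∈ P, t • x ∈ P)
    (hP0 : (0 : EuclideanSpace ℝ (Fin d)) ∈ P)
    (z : EuclideanSpace ℝ (Fin d)) (hz : z ∈ Submodule.span ℝ P) :
    ∃ p ∈ P, ∃ q ∈ P, z = q - p := by
  induction hz using Submodule.span_induction with
  | mem x hx => exact ⟨0, hP0, x, hx, by simp⟩
  | zero => exact ⟨0, hP0, 0, hP0, by simp⟩
  | add x y _ _ ihx ihy =>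
    obtain ⟨p1, hp1, q1, hq1, rfl⟩ := ihx
    obtain ⟨p2, hp2, q2, hq2, rfl⟩ := ihy
    exact ⟨p1 + p2, hPadd _ hp1 _ hp2, q1 + q2, hPadd _ hq1 _ hq2, by abel⟩
  | smul c x _ ihx =>
    obtain ⟨p, hp, q, hq, rfl⟩ := ihx
    rcases le_or_gt 0 c with hc | hc
    · exact ⟨c • p, hPsmul c hc _ hp, c • q, hPsmul c hc _ hq, by
        rw [smul_sub]⟩
    · refine ⟨(-c) • q, hPsmul (-c) (by linarith) _ hq, (-c) • p,
        hPsmul (-c) (by linarith) _ hp, ?_⟩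
      rw [smul_sub]
      module

/-- Let `P ⊆ ℝ^d` be a closed convex cone spanning `ℝ^d` with `P ∩ (−P) = {0}`
and let `A` be a `P`-module. If `f ∈ L²(ℝ^d)` vanishes a.e. on `(A + x)ᶜ` for every `x ∈ P`,
then `f = 0`; i.e. the isometric representation `V^A` is pure. -/
theorem module_representation_pure {d : ℕ}
    (P : Set (EuclideanSpace ℝ (Fin d)))
    (hPclosed : IsClosed P)
    (hPadd : ∀ x ∈ P, ∀ y ∈ P, x + y ∈ P)
    (hPsmul : ∀ (t : ℝ), 0 ≤ t → ∀ x ∈ P, t • x ∈ P)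
    (hPspan : Submodule.span ℝ P = ⊤)
    (hPpointed : P ∩ (-P) = {0})
    (A : Set (EuclideanSpace ℝ (Fin d)))
    (hAne : A.Nonempty) (hAproper : A ≠ Set.univ) (hAclosed : IsClosed A)
    (hAmod : ∀ x ∈ A, ∀ p ∈ P, x + p ∈ A) :
    ∀ f : Lp ℂ 2 (volume : Measure (EuclideanSpace ℝ (Fin d))),
      (∀ x ∈ P, ∀ᵐ y ∂(volume : Measure (EuclideanSpace ℝ (Fin d))),
        y ∉ (fun a => a + x) '' A → f y = 0) → f = 0 := by
  intro f hf
  have hP0 : (0 : EuclideanSpace ℝ (Fin d)) ∈ P := by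
    have : (0 : EuclideanSpace ℝ (Fin d)) ∈ P ∩ (-P) := by
      rw [hPpointed]; exact rfl
    exact this.1
  -- countable dense subset D of P
  obtain ⟨D, hDP, hDc, hDdense⟩ :=
    (TopologicalSpace.IsSeparable.of_separableSpace P).exists_countable_dense_subset
  -- key claim: every point is outside A + x for some x ∈ D
  have key : ∀ y : EuclideanSpace ℝ (Fin d), ∃ x ∈ D, y ∉ (fun a => a + x) '' A := by
    intro y
    by_contra h
    push_neg at h
    -- then y - x ∈ A for all x ∈ D, hence for all x ∈ P by closedness
    have hD : ∀ x ∈ D, y - x ∈ A := by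
      intro x hx
      obtain ⟨a, ha, hax⟩ := h x hx
      simp only at hax
      rw [← hax]; simpa using ha
    have hP : ∀ x ∈ P, y - x ∈ A := by
      intro x hx
      have hcl : IsClosed {x : EuclideanSpace ℝ (Fin d) | y - x ∈ A} :=
        hAclosed.preimage (continuous_const.sub continuous_id)
      have : closure D ⊆ {x | y - x ∈ A} := hcl.closure_subset_iff.2 hD
      exact this (hDdense hx)
    -- contradiction with A ≠ univ
    apply hAproper
    ext a
    simp only [Set.mem_univ, iff_true]
    have haz : a - y ∈ Submodule.span ℝ P := by rw [hPspan]; trivial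
    obtain ⟨p, hp, q, hq, hpq⟩ := cone_span_diff P hPadd hPsmul hP0 _ haz
    have : (y - p) + q ∈ A := hAmod _ (hP p hp) _ hq
    have heq : (y - p) + q = a := by
      have : a = y + (q - p) := by rw [← hpq]; abel
      rw [this]; abel
    rwa [heq] at this
  -- combine the countably many a.e. statements
  have hae : ∀ᵐ y ∂(volume : Measure (EuclideanSpace ℝ (Fin d))),
      ∀ x ∈ D, y ∉ (fun a => a + x) '' A → f y = 0 := by
    rw [MeasureTheory.ae_ball_iff hDc]
    exact fun x hx => hf x (hDP hx)
  have hzero : ∀ᵐ y ∂(volume : Measure (EuclideanSpace ℝ (Fin d))), f y = 0 := by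
    filter_upwards [hae] with y hy
    obtain ⟨x, hxD, hxy⟩ := key y
    exact hy x hxD hxy
  exact (MeasureTheory.Lp.eq_zero_iff_ae_eq_zero).2 hzero
end
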